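/- Let ρ ≥ 0. For every T > 0 there exists a constant C_T > 0 such that for all t with 0 < t ≤ T and all x ∈ [0,1], ∫₀¹ H_t(x,y)² dy ≤ C_T · t^{−1/4}; equivalently, the L²(0,1)-norm of y ↦ H_t(x,y) is at most √(C_T) · t^{−1/8}. -/

import Mathlib

open Real MeasureTheory

-- integral of cos(mπy) over [0,1] vanishes for nonzero integer m
lemma int_cos_int (m : ℤ) (hm : m ≠ 0) :
    ∫ y in (0:ℝ)..1, Real.cos ((m:ℝ) * π * y) = 0 := by
  have hc : (m:ℝ) * π ≠ 0 := by
    have : (m:ℝ) ≠ 0 := Int.cast_ne_zero.mpr hm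
    positivity
  have : ∫ y in (0:ℝ)..1, Real.cos ((m:ℝ) * π * y) =
      ((m:ℝ) * π)⁻¹ • ∫ u in ((m:ℝ)*π*0)..((m:ℝ)*π*1), Real.cos u := by
    simpa using intervalIntegral.integral_comp_mul_left (f := Real.cos) hc (a := (0:ℝ)) (b := 1)
  rw [this]
  simp [Real.sin_int_mul_pi]

lemma orth (m n : ℕ) :
    ∫ y in (0:ℝ)..1,
      Real.cos ((m+1:ℝ)*π*y) * Real.cos ((n+1:ℝ)*π*y)
      = if m = n then 1/2 else 0 := by
  have key : ∀ y : ℝ, Real.cos ((m+1:ℝ)*π*y) * Real.cos ((n+1:ℝ)*π*y)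
      = (Real.cos ((((m:ℤ)-(n:ℤ) : ℤ):ℝ)*π*y) + Real.cos ((((m:ℤ)+(n:ℤ)+2 : ℤ):ℝ)*π*y)) / 2 := by
    intro y
    push_cast
    rw [show ((m:ℝ)-(n:ℝ))*π*y = (m+1:ℝ)*π*y - (n+1:ℝ)*π*y by ring,
      show ((m:ℝ)+(n:ℝ)+2)*π*y = (m+1:ℝ)*π*y + (n+1:ℝ)*π*y by ring,
      Real.cos_sub, Real.cos_add]
    ring
  simp only [key]
  have i1 : IntervalIntegrable (fun y => Real.cos ((((m:ℤ)-(n:ℤ) : ℤ):ℝ)*π*y)) volume 0 1 :=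
    (by continuity : Continuous fun y => Real.cos ((((m:ℤ)-(n:ℤ) : ℤ):ℝ)*π*y)).intervalIntegrable _ _
  have i2 : IntervalIntegrable (fun y => Real.cos ((((m:ℤ)+(n:ℤ)+2 : ℤ):ℝ)*π*y)) volume 0 1 :=
    (by continuity : Continuous fun y => Real.cos ((((m:ℤ)+(n:ℤ)+2 : ℤ):ℝ)*π*y)).intervalIntegrable _ _
  rw [intervalIntegral.integral_div, intervalIntegral.integral_add i1 i2,
    int_cos_int ((m:ℤ)+(n:ℤ)+2) (by omega)]
  by_cases h : m = n
  · subst h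
    simp
  · rw [int_cos_int ((m:ℤ)-(n:ℤ)) (by omega), if_neg h]
    ring

lemma swap_tsum_integral {f : ℕ → ℝ → ℝ} (hc : ∀ k, Continuous (f k)) {u : ℕ → ℝ}
    (hu : Summable u) (hb : ∀ k y, |f k y| ≤ u k) :
    ∫ y in (0:ℝ)..1, ∑' k, f k y = ∑' k, ∫ y in (0:ℝ)..1, f k y := by
  have hu0 : ∀ k, 0 ≤ u k := fun k => le_trans (abs_nonneg _) (hb k 0)
  rw [intervalIntegral.integral_of_le zero_le_one]
  rw [MeasureTheory.integral_tsum (fun k => (hc k).aestronglyMeasurable)]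
  · exact tsum_congr fun k => (intervalIntegral.integral_of_le zero_le_one).symm
  · have hbd : ∀ k, ∫⁻ y in Set.Ioc (0:ℝ) 1, ‖f k y‖₊ ∂volume ≤ ENNReal.ofReal (u k) := by
      intro k
      calc ∫⁻ y in Set.Ioc (0:ℝ) 1, (‖f k y‖₊ : ENNReal) ∂volume
          ≤ ∫⁻ _ in Set.Ioc (0:ℝ) 1, ENNReal.ofReal (u k) ∂volume := by
            refine lintegral_mono fun y => ?_
            rw [← enorm_eq_nnnorm, ← ofReal_norm]
            exact ENNReal.ofReal_le_ofReal ((Real.norm_eq_abs _) ▸ hb k y)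
        _ = ENNReal.ofReal (u k) := by simp
    refine ne_top_of_le_ne_top ?_ (ENNReal.tsum_le_tsum hbd)
    rw [← ENNReal.ofReal_tsum_of_nonneg hu0 hu]
    exact ENNReal.ofReal_ne_top

lemma summable_exp_lin (b : ℝ) (hb : 0 < b) :
    Summable (fun k : ℕ => Real.exp (-(b*(k+1)))) := by
  have h : ∀ k : ℕ, Real.exp (-(b*(k+1))) = Real.exp (-b) * Real.exp (-b) ^ k := by
    intro k
    rw [← Real.exp_nat_mul]
    rw [← Real.exp_add]
    ring_nf
  simp only [h]
  exact (summable_geometric_of_lt_one (Real.exp_nonneg _)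
    (Real.exp_lt_one_iff.mpr (by linarith))).mul_left _

lemma tsum_exp_lin_le (b : ℝ) (hb : 0 < b) :
    ∑' k : ℕ, Real.exp (-(b*(k+1))) ≤ 1 / b := by
  have h : ∀ k : ℕ, Real.exp (-(b*(k+1))) = Real.exp (-b) * Real.exp (-b) ^ k := by
    intro k
    rw [← Real.exp_nat_mul, ← Real.exp_add]
    ring_nf
  have hlt : Real.exp (-b) < 1 := Real.exp_lt_one_iff.mpr (by linarith)
  calc ∑' k : ℕ, Real.exp (-(b*(k+1)))
      = Real.exp (-b) * ∑' k : ℕ, Real.exp (-b) ^ k := by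
        simp only [h]; exact tsum_mul_left
    _ = Real.exp (-b) * (1 - Real.exp (-b))⁻¹ := by
        rw [tsum_geometric_of_lt_one (Real.exp_nonneg _) hlt]
    _ ≤ 1 / b := by
        have h1 : 0 < 1 - Real.exp (-b) := by linarith
        rw [show Real.exp (-b) * (1 - Real.exp (-b))⁻¹ = Real.exp (-b) / (1 - Real.exp (-b)) by ring,
          div_le_div_iff₀ h1 hb]
        have h2 := Real.add_one_le_exp b
        have h4 : Real.exp (-b) * Real.exp b = 1 := by
          rw [← Real.exp_add]; simp
        nlinarith [Real.exp_pos b, Real.exp_pos (-b)]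

lemma summable_exp_quartic (a : ℝ) (ha : 0 < a) :
    Summable (fun k : ℕ => Real.exp (-(a*((k:ℝ)+1)^4))) := by
  refine Summable.of_nonneg_of_le (fun k => (Real.exp_pos _).le)
    (fun k => Real.exp_le_exp.mpr ?_) (summable_exp_lin a ha)
  have h1 : (1:ℝ) ≤ (k:ℝ) + 1 := by
    have : (0:ℝ) ≤ (k:ℝ) := Nat.cast_nonneg k
    linarith
  have : (k:ℝ) + 1 ≤ ((k:ℝ)+1)^4 := le_self_pow₀ h1 (by norm_num)
  nlinarith

lemma tsum_exp_quartic_le (a : ℝ) (ha : 0 < a) :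
    ∑' k : ℕ, Real.exp (-(a*((k:ℝ)+1)^4)) ≤ 2 * a ^ (-(1/4) : ℝ) + 1 := by
  obtain ⟨N, hNa, hNle⟩ : ∃ N : ℕ, a ^ (-(1/4) : ℝ) ≤ (N:ℝ) ∧ (N:ℝ) ≤ a ^ (-(1/4) : ℝ) + 1 :=
    ⟨⌈a ^ (-(1/4) : ℝ)⌉₊, Nat.le_ceil _, (Nat.ceil_lt_add_one (Real.rpow_nonneg ha.le _)).le⟩
  set b : ℝ := a ^ ((1/4) : ℝ) with hbdef
  have hb : 0 < b := Real.rpow_pos_of_pos ha _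
  have hinv : a ^ (-(1/4) : ℝ) = 1 / b := by
    rw [hbdef, Real.rpow_neg ha.le]
    exact (one_div _).symm
  have hb_eq : a * (a ^ (-(1/4) : ℝ)) ^ 3 = b := by
    rw [hbdef, ← Real.rpow_natCast (a ^ (-(1/4):ℝ)) 3, ← Real.rpow_mul ha.le]
    have : a * a ^ ((-(1/4):ℝ) * (3:ℕ)) = a ^ (1:ℝ) * a ^ ((-(3/4)):ℝ) := by
      norm_num [Real.rpow_one]
    rw [this, ← Real.rpow_add ha]
    norm_num
  have hsum := summable_exp_quartic a ha
  have hsplit := (Summable.sum_add_tsum_nat_add (f := fun k : ℕ => Real.exp (-(a*((k:ℝ)+1)^4))) N hsum).symm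
  rw [hsplit]
  have h1 : ∑ i ∈ Finset.range N, Real.exp (-(a*((i:ℝ)+1)^4)) ≤ (N:ℝ) := by
    calc ∑ i ∈ Finset.range N, Real.exp (-(a*((i:ℝ)+1)^4))
        ≤ ∑ i ∈ Finset.range N, 1 := by
          refine Finset.sum_le_sum fun i _ => ?_
          rw [Real.exp_le_one_iff]
          have : 0 < a*((i:ℝ)+1)^4 := by positivity
          linarith
      _ = (N:ℝ) := by simp
  have h2 : ∑' k : ℕ, Real.exp (-(a*(((k+N:ℕ):ℝ)+1)^4)) ≤ a ^ (-(1/4) : ℝ) := by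
    have hterm : ∀ k : ℕ, Real.exp (-(a*(((k+N:ℕ):ℝ)+1)^4)) ≤ Real.exp (-(b*((k:ℝ)+1))) := by
      intro k
      rw [Real.exp_le_exp, neg_le_neg_iff]
      push_cast
      set x : ℝ := (k:ℝ) + (N:ℝ) + 1 with hx
      have hN0 : (0:ℝ) ≤ (N:ℝ) := Nat.cast_nonneg N
      have hk0 : (0:ℝ) ≤ (k:ℝ) := Nat.cast_nonneg k
      have hxpos : 0 < x := by rw [hx]; linarith
      have hkx : (k:ℝ) + 1 ≤ x := by rw [hx]; linarith
      have hNx : a ^ (-(1/4):ℝ) ≤ x := by rw [hx]; linarith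
      have hcube : (a ^ (-(1/4):ℝ))^3 ≤ x^3 :=
        pow_le_pow_left₀ (Real.rpow_nonneg ha.le _) hNx 3
      calc b*((k:ℝ)+1) = a * (a ^ (-(1/4):ℝ))^3 * ((k:ℝ)+1) := by rw [hb_eq]
        _ ≤ a * x^3 * ((k:ℝ)+1) := by
            have h5 := mul_le_mul_of_nonneg_left hcube ha.le
            exact mul_le_mul_of_nonneg_right h5 (by linarith)
        _ ≤ a * x^3 * x := mul_le_mul_of_nonneg_left hkx (by positivity)
        _ = a * x^4 := by ring
    calc ∑' k : ℕ, Real.exp (-(a*(((k+N:ℕ):ℝ)+1)^4))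
        ≤ ∑' k : ℕ, Real.exp (-(b*((k:ℝ)+1))) := by
          refine Summable.tsum_le_tsum hterm ?_ (summable_exp_lin b hb)
          exact (summable_nat_add_iff N).mpr hsum
      _ ≤ 1 / b := tsum_exp_lin_le b hb
      _ = a ^ (-(1/4) : ℝ) := hinv.symm
  have := add_le_add (le_trans h1 hNle) h2
  linarith

lemma parseval (a u : ℕ → ℝ) (hu : Summable u) (hb : ∀ k, |a k| ≤ u k) :
    ∫ y in (0:ℝ)..1, (1 + 2 * ∑' k, a k * Real.cos (((k:ℝ)+1)*π*y))^2
      = 1 + 2 * ∑' k, (a k)^2 := by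
  set c : ℕ → ℝ → ℝ := fun k y => Real.cos (((k:ℝ)+1)*π*y) with hc
  have hu0 : ∀ k, 0 ≤ u k := fun k => le_trans (abs_nonneg _) (hb k)
  have hcc : ∀ k, Continuous (c k) := fun k => by
    simp only [hc]; fun_prop
  have hcont : ∀ k, Continuous fun y => a k * c k y := fun k => continuous_const.mul (hcc k)
  have hbc : ∀ k y, |a k * c k y| ≤ u k := by
    intro k y
    rw [abs_mul]
    calc |a k| * |c k y| ≤ u k * 1 :=
      mul_le_mul (hb k) (Real.abs_cos_le_one _) (abs_nonneg _) (hu0 k)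
    _ = u k := mul_one _
  set g : ℝ → ℝ := fun y => ∑' k, a k * c k y with hg
  have hgc : Continuous g := by
    refine continuous_tsum hcont hu fun k y => ?_
    simpa [Real.norm_eq_abs, abs_mul] using hbc k y
  set M : ℝ := ∑' k, u k with hM
  have hM0 : 0 ≤ M := tsum_nonneg hu0
  have hgbd : ∀ y, |g y| ≤ M := by
    intro y
    have hsn : Summable fun k => ‖a k * c k y‖ := by
      refine Summable.of_nonneg_of_le (fun k => norm_nonneg _) (fun k => ?_) hu
      simpa [Real.norm_eq_abs, abs_mul] using hbc k y
    calc |g y| ≤ ∑' k, ‖a k * c k y‖ := by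
          simpa [Real.norm_eq_abs] using norm_tsum_le_tsum_norm hsn
      _ ≤ M := Summable.tsum_le_tsum (fun k => by simpa [Real.norm_eq_abs, abs_mul] using hbc k y) hsn hu
  -- integral of a single cosine vanishes
  have hic : ∀ k : ℕ, ∫ y in (0:ℝ)..1, c k y = 0 := by
    intro k
    have := int_cos_int ((k:ℤ)+1) (by omega)
    push_cast at this
    simpa [hc] using this
  -- ∫ g = 0
  have hintg : ∫ y in (0:ℝ)..1, g y = 0 := by
    rw [hg, swap_tsum_integral hcont hu hbc]
    have : ∀ k : ℕ, ∫ y in (0:ℝ)..1, a k * c k y = 0 := by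
      intro k
      rw [intervalIntegral.integral_const_mul, hic k, mul_zero]
    simp [this]
  -- ∫ c j * g = a j / 2
  have hcg : ∀ j : ℕ, ∫ y in (0:ℝ)..1, c j y * g y = a j * (1/2) := by
    intro j
    have hrw : ∀ y, c j y * g y = ∑' k, c j y * (a k * c k y) := by
      intro y
      rw [hg]
      exact (tsum_mul_left).symm
    have hcont2 : ∀ k, Continuous fun y => c j y * (a k * c k y) :=
      fun k => (hcc j).mul (hcont k)
    have hb2 : ∀ k y, |c j y * (a k * c k y)| ≤ u k := by
      intro k y
      rw [abs_mul]
      calc |c j y| * |a k * c k y| ≤ 1 * u k :=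
        mul_le_mul (Real.abs_cos_le_one _) (hbc k y) (abs_nonneg _) zero_le_one
      _ = u k := one_mul _
    simp only [hrw]
    rw [swap_tsum_integral hcont2 hu hb2]
    have hval : ∀ k : ℕ, ∫ y in (0:ℝ)..1, c j y * (a k * c k y)
        = if k = j then a j * (1/2) else 0 := by
      intro k
      have : ∀ y, c j y * (a k * c k y) = a k * (c j y * c k y) := fun y => by ring
      simp only [this]
      rw [intervalIntegral.integral_const_mul]
      have horth := orth j k
      simp only [hc]
      rw [show ((j:ℝ)+1) = ((j:ℝ)+1) from rfl]
      rw [horth]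
      by_cases h : j = k
      · subst h; simp
      · rw [if_neg h, if_neg (Ne.symm h), mul_zero]
    simp only [hval]
    exact tsum_ite_eq j (fun _ => a j * (1/2))
  -- ∫ g^2 = (∑' a^2) / 2
  have hintg2 : ∫ y in (0:ℝ)..1, (g y)^2 = (∑' k, (a k)^2) * (1/2) := by
    have hrw : ∀ y, (g y)^2 = ∑' j, a j * c j y * g y := by
      intro y
      rw [pow_two]
      nth_rewrite 1 [hg]
      exact (tsum_mul_right).symm
    have hcont3 : ∀ j, Continuous fun y => a j * c j y * g y :=
      fun j => (hcont j).mul hgc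
    have hb3 : ∀ j y, |a j * c j y * g y| ≤ u j * M := by
      intro j y
      rw [abs_mul]
      exact mul_le_mul (hbc j y) (hgbd y) (abs_nonneg _) (hu0 j)
    simp only [hrw]
    rw [swap_tsum_integral hcont3 (hu.mul_right M) hb3]
    have hval : ∀ j : ℕ, ∫ y in (0:ℝ)..1, a j * c j y * g y = (a j)^2 * (1/2) := by
      intro j
      have : ∀ y, a j * c j y * g y = a j * (c j y * g y) := fun y => by ring
      simp only [this]
      rw [intervalIntegral.integral_const_mul, hcg j]
      ring
    simp only [hval]
    exact tsum_mul_right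
  -- now expand the square
  have hexp : ∀ y, (1 + 2 * g y)^2 = 1 + 4 * g y + 4 * (g y)^2 := fun y => by ring
  have hval : ∫ y in (0:ℝ)..1, (1 + 2 * g y)^2 = 1 + 2 * ∑' k, (a k)^2 := by
    simp only [hexp]
    have i1 : IntervalIntegrable (fun _ : ℝ => (1:ℝ)) volume 0 1 :=
      intervalIntegrable_const
    have i2 : IntervalIntegrable (fun y => 4 * g y) volume 0 1 :=
      (continuous_const.mul hgc).intervalIntegrable _ _
    have i3 : IntervalIntegrable (fun y => 4 * (g y)^2) volume 0 1 :=
      (continuous_const.mul (hgc.pow 2)).intervalIntegrable _ _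
    rw [intervalIntegral.integral_add (i1.add i2) i3, intervalIntegral.integral_add i1 i2,
      intervalIntegral.integral_const_mul, intervalIntegral.integral_const_mul, hintg, hintg2]
    simp
    ring
  exact hval

/-- The Green's function of `-∂_x⁴ + ρ∂_x²` on `[0,1]` with Neumann boundary conditions:
`H_t(x,y) = 1 + 2 ∑_{k=1}^∞ e^{-(k⁴π⁴ + ρk²π²)t} cos(kπx) cos(kπy)`. -/
noncomputable def Hker (ρ t x y : ℝ) : ℝ :=
  1 + 2 * ∑' k : ℕ,
      Real.exp (-(((k + 1 : ℝ) ^ 4 * π ^ 4 + ρ * (k + 1 : ℝ) ^ 2 * π ^ 2) * t)) *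
        Real.cos ((k + 1 : ℝ) * π * x) * Real.cos ((k + 1 : ℝ) * π * y)

theorem fourth_order_kernel_L2_bound (ρ : ℝ) (hρ : 0 ≤ ρ) (T : ℝ) (hT : 0 < T) :
    ∃ C : ℝ, 0 < C ∧ ∀ t x : ℝ, 0 < t → t ≤ T → x ∈ Set.Icc (0 : ℝ) 1 →
      ∫ y in (0 : ℝ)..1, (Hker ρ t x y) ^ 2 ≤ C * t ^ (-(1/4) : ℝ) := by
  have hπ : 0 < π := Real.pi_pos
  set κ : ℝ := (2 * π ^ 4) ^ (-(1/4) : ℝ) with hκ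
  have hκ0 : 0 < κ := Real.rpow_pos_of_pos (by positivity) _
  refine ⟨3 * T ^ ((1/4) : ℝ) + 4 * κ, by positivity, ?_⟩
  intro t x ht htT hx
  set a : ℕ → ℝ := fun k =>
    Real.exp (-(((k + 1 : ℝ) ^ 4 * π ^ 4 + ρ * (k + 1 : ℝ) ^ 2 * π ^ 2) * t)) *
      Real.cos ((k + 1 : ℝ) * π * x) with ha
  set u : ℕ → ℝ := fun k => Real.exp (-(π ^ 4 * t * ((k:ℝ) + 1) ^ 4)) with hu
  have hargs : ∀ k : ℕ, π ^ 4 * t * ((k:ℝ) + 1) ^ 4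
      ≤ (((k:ℝ) + 1) ^ 4 * π ^ 4 + ρ * ((k:ℝ) + 1) ^ 2 * π ^ 2) * t := by
    intro k
    have h1 : 0 ≤ ρ * ((k:ℝ) + 1) ^ 2 * π ^ 2 * t := by positivity
    nlinarith
  have hb : ∀ k, |a k| ≤ u k := by
    intro k
    rw [ha, hu, abs_mul, Real.abs_exp]
    calc Real.exp (-(((k + 1 : ℝ) ^ 4 * π ^ 4 + ρ * (k + 1 : ℝ) ^ 2 * π ^ 2) * t)) *
          |Real.cos ((k + 1 : ℝ) * π * x)|
        ≤ Real.exp (-(((k + 1 : ℝ) ^ 4 * π ^ 4 + ρ * (k + 1 : ℝ) ^ 2 * π ^ 2) * t)) * 1 :=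
          mul_le_mul_of_nonneg_left (Real.abs_cos_le_one _) (Real.exp_nonneg _)
      _ ≤ Real.exp (-(π ^ 4 * t * ((k:ℝ) + 1) ^ 4)) := by
          rw [mul_one, Real.exp_le_exp, neg_le_neg_iff]
          exact hargs k
  have husum : Summable u := summable_exp_quartic (π ^ 4 * t) (by positivity)
  have hParse : ∫ y in (0:ℝ)..1, (Hker ρ t x y) ^ 2 = 1 + 2 * ∑' k, (a k)^2 := by
    have : ∀ y, Hker ρ t x y = 1 + 2 * ∑' k, a k * Real.cos (((k:ℝ)+1)*π*y) := by
      intro y; rfl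
    simp only [this]
    exact parseval a u husum hb
  rw [hParse]
  -- bound the tsum of squares
  have hv : ∀ k : ℕ, (a k)^2 ≤ Real.exp (-(2 * π ^ 4 * t * ((k:ℝ) + 1) ^ 4)) := by
    intro k
    have h1 : (a k)^2 ≤ (u k)^2 := by
      rw [← sq_abs (a k)]
      exact pow_le_pow_left₀ (abs_nonneg _) (hb k) 2
    refine h1.trans ?_
    rw [hu]
    rw [← Real.exp_nat_mul]
    rw [Real.exp_le_exp]
    push_cast
    ring_nf
    exact le_rfl

  have hsq : Summable (fun k : ℕ => (a k)^2) := by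
    refine Summable.of_nonneg_of_le (fun k => sq_nonneg _) hv
      (summable_exp_quartic (2 * π ^ 4 * t) (by positivity))
  have htsum : ∑' k, (a k)^2 ≤ 2 * κ * t ^ (-(1/4) : ℝ) + 1 := by
    calc ∑' k, (a k)^2 ≤ ∑' k : ℕ, Real.exp (-(2 * π ^ 4 * t * ((k:ℝ) + 1) ^ 4)) :=
          Summable.tsum_le_tsum hv hsq (summable_exp_quartic (2 * π ^ 4 * t) (by positivity))
      _ ≤ 2 * (2 * π ^ 4 * t) ^ (-(1/4) : ℝ) + 1 :=
          tsum_exp_quartic_le (2 * π ^ 4 * t) (by positivity)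
      _ = 2 * κ * t ^ (-(1/4) : ℝ) + 1 := by
          rw [hκ, Real.mul_rpow (by positivity) ht.le]
          ring
  have hone : 1 ≤ T ^ ((1/4) : ℝ) * t ^ (-(1/4) : ℝ) := by
    have h1 : t ^ ((1/4) : ℝ) ≤ T ^ ((1/4) : ℝ) :=
      Real.rpow_le_rpow ht.le htT (by norm_num)
    have h2 : t ^ ((1/4) : ℝ) * t ^ (-(1/4) : ℝ) = 1 := by
      rw [← Real.rpow_add ht]
      norm_num
    have h3 : 0 < t ^ (-(1/4) : ℝ) := Real.rpow_pos_of_pos ht _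
    calc (1:ℝ) = t ^ ((1/4) : ℝ) * t ^ (-(1/4) : ℝ) := h2.symm
      _ ≤ T ^ ((1/4) : ℝ) * t ^ (-(1/4) : ℝ) := mul_le_mul_of_nonneg_right h1 h3.le
  have h3 : 0 < t ^ (-(1/4) : ℝ) := Real.rpow_pos_of_pos ht _
  calc 1 + 2 * ∑' k, (a k)^2 ≤ 1 + 2 * (2 * κ * t ^ (-(1/4) : ℝ) + 1) := by linarith
    _ = 3 + 4 * κ * t ^ (-(1/4) : ℝ) := by ring
    _ ≤ 3 * (T ^ ((1/4) : ℝ) * t ^ (-(1/4) : ℝ)) + 4 * κ * t ^ (-(1/4) : ℝ) := by linarith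
    _ = (3 * T ^ ((1/4) : ℝ) + 4 * κ) * t ^ (-(1/4) : ℝ) := by ring
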